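/- Let n be a natural number and let X, Y be nonzero n×n complex matrices. Then cos² Θ(X,Y) ≤ cos Θ(|X*|,|Y*|) · cos Θ(|X|,|Y|). -/

import Mathlib

open Matrix
open scoped ComplexOrder

/-- Hilbert–Schmidt (Frobenius) norm: ‖X‖₂ = √(Re Tr(XᴴX)). -/
noncomputable def hsNorm {n : ℕ} (X : Matrix (Fin n) (Fin n) ℂ) : ℝ :=
  Real.sqrt ((Matrix.trace (Xᴴ * X)).re)

/-- Angle Θ(X,Y) = arccos(Re Tr(YᴴX) / (‖X‖₂‖Y‖₂)). -/
noncomputable def theta {n : ℕ} (X Y : Matrix (Fin n) (Fin n) ℂ) : ℝ :=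
  Real.arccos ((Matrix.trace (Yᴴ * X)).re / (hsNorm X * hsNorm Y))

/-- |X| : the positive semidefinite square root of XᴴX. -/
noncomputable def matAbs {n : ℕ} (X : Matrix (Fin n) (Fin n) ℂ) : Matrix (Fin n) (Fin n) ℂ :=
  ((Matrix.posSemidef_conjTranspose_mul_self X).1.eigenvectorUnitary : Matrix (Fin n) (Fin n) ℂ) *
    diagonal (((↑) : ℝ → ℂ) ∘ Real.sqrt ∘ (Matrix.posSemidef_conjTranspose_mul_self X).1.eigenvalues) *
    (star ((Matrix.posSemidef_conjTranspose_mul_self X).1.eigenvectorUnitary : Matrix (Fin n) (Fin n) ℂ))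

namespace HSAux

variable {m : Type*} [Fintype m] [DecidableEq m]

lemma cfc_mul {H : Matrix m m ℂ} (hH : H.IsHermitian) (f g : ℝ → ℝ) :
    hH.cfc f * hH.cfc g = hH.cfc (fun x => f x * g x) := by
  have key {a b c d e f : Matrix m m ℂ} : (a * b * c) * (d * e * f) = a * (b * (c * d) * e) * f := by
    simp only [mul_assoc]
  simp only [Matrix.IsHermitian.cfc, Unitary.conjStarAlgAut_apply, key, SetLike.coe_mem, Unitary.star_mul_self_of_mem, mul_one,
    diagonal_mul_diagonal, Function.comp_apply]
  congr! with i
  simp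

lemma cfc_add {H : Matrix m m ℂ} (hH : H.IsHermitian) (f g : ℝ → ℝ) :
    hH.cfc f + hH.cfc g = hH.cfc (fun x => f x + g x) := by
  simp only [Matrix.IsHermitian.cfc, Unitary.conjStarAlgAut_apply, ← add_mul, ← mul_add, diagonal_add]
  congr! with i
  simp

lemma cfc_id {H : Matrix m m ℂ} (hH : H.IsHermitian) :
    hH.cfc (fun x => x) = H := by
  conv_rhs => rw [hH.spectral_theorem]
  rfl

lemma cfc_const {H : Matrix m m ℂ} (hH : H.IsHermitian) (c : ℝ) :
    hH.cfc (fun _ => c) = (c : ℂ) • 1 := by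
  have h1 : diagonal (RCLike.ofReal ∘ (fun _ : ℝ => c) ∘ hH.eigenvalues) =
      (c : ℂ) • (1 : Matrix m m ℂ) := by
    ext i j
    rcases eq_or_ne i j with rfl | hij
    · simp [Matrix.diagonal_apply_eq, Matrix.one_apply_eq]
    · simp [Matrix.diagonal_apply_ne _ hij, Matrix.one_apply_ne hij]
  rw [Matrix.IsHermitian.cfc, Unitary.conjStarAlgAut_apply, h1, mul_smul_comm, smul_mul_assoc, mul_one,
    Unitary.mul_star_self_of_mem (SetLike.coe_mem hH.eigenvectorUnitary)]

lemma cfc_one {H : Matrix m m ℂ} (hH : H.IsHermitian) :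
    hH.cfc (fun _ => 1) = 1 := by
  rw [cfc_const hH 1]; simp

lemma cfc_congr {H : Matrix m m ℂ} (hH : H.IsHermitian) {f g : ℝ → ℝ}
    (h : ∀ i, f (hH.eigenvalues i) = g (hH.eigenvalues i)) :
    hH.cfc f = hH.cfc g := by
  have e : (RCLike.ofReal ∘ f ∘ hH.eigenvalues : m → ℂ) = RCLike.ofReal ∘ g ∘ hH.eigenvalues := by
    funext i
    show (RCLike.ofReal (f (hH.eigenvalues i)) : ℂ) = RCLike.ofReal (g (hH.eigenvalues i))
    rw [h i]
  rw [Matrix.IsHermitian.cfc, Matrix.IsHermitian.cfc, e]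

lemma cfc_matrix_congr {H H' : Matrix m m ℂ} (e : H = H') (hH : H.IsHermitian) (f : ℝ → ℝ) :
    hH.cfc f = (e ▸ hH : H'.IsHermitian).cfc f := by
  subst e; rfl

lemma cfc_posSemidef {H : Matrix m m ℂ} (hH : H.IsHermitian) {f : ℝ → ℝ}
    (h : ∀ i, 0 ≤ f (hH.eigenvalues i)) : (hH.cfc f).PosSemidef := by
  rw [Matrix.IsHermitian.cfc, Unitary.conjStarAlgAut_apply]
  apply Matrix.PosSemidef.mul_mul_conjTranspose_same (B := (hH.eigenvectorUnitary : Matrix m m ℂ))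
  · refine Matrix.posSemidef_diagonal_iff.mpr fun i => ?_
    rw [Function.comp_apply, RCLike.nonneg_iff]
    constructor
    · simpa using h i
    · simp


lemma posDef_of_posSemidef_isUnit {M : Matrix m m ℂ} (h : M.PosSemidef) (hu : IsUnit M) :
    M.PosDef := by
  exact h.posDef_iff_isUnit.mpr hu

lemma cfc_posDef {H : Matrix m m ℂ} (hH : H.IsHermitian) {f : ℝ → ℝ}
    (h : ∀ i, 0 < f (hH.eigenvalues i)) : (hH.cfc f).PosDef := by
  refine posDef_of_posSemidef_isUnit (cfc_posSemidef hH fun i => (h i).le) ?_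
  have h1 : hH.cfc f * hH.cfc (fun x => (f x)⁻¹) = 1 := by
    rw [cfc_mul, cfc_congr hH (g := fun _ => 1) fun i => mul_inv_cancel₀ (h i).ne']
    exact cfc_one hH
  have h2 : hH.cfc (fun x => (f x)⁻¹) * hH.cfc f = 1 := by
    rw [cfc_mul, cfc_congr hH (g := fun _ => 1) fun i => inv_mul_cancel₀ (h i).ne']
    exact cfc_one hH
  exact ⟨⟨hH.cfc f, hH.cfc (fun x => (f x)⁻¹), h1, h2⟩, rfl⟩


open Polynomial in
lemma cfc_poly {H : Matrix m m ℂ} (hH : H.IsHermitian) (p : Polynomial ℝ) :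
    hH.cfc (fun x => p.eval x) = Polynomial.aeval H p := by
  induction p using Polynomial.induction_on with
  | C a =>
      simp only [eval_C, aeval_C]
      rw [cfc_const]
      rw [Algebra.algebraMap_eq_smul_one]
      ext i j
      simp [Matrix.smul_apply, Complex.real_smul]
  | add p q hp hq =>
      simp only [eval_add, map_add, ← hp, ← hq, ← cfc_add]
  | monomial k a hk =>
      have e1 : (C a * X ^ (k + 1) : ℝ[X]) = (C a * X ^ k) * X := by ring
      rw [e1, _root_.map_mul, aeval_X, ← hk]
      have e2 : (fun x => eval x ((C a * X ^ k) * X)) = fun x => eval x (C a * X ^ k) * x := by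
        funext x; simp
      rw [e2, ← cfc_mul, cfc_id]

open Polynomial in
lemma semiconj_aeval (A : Matrix m m ℂ) (p : Polynomial ℝ) :
    A * Polynomial.aeval (Aᴴ * A) p = Polynomial.aeval (A * Aᴴ) p * A := by
  have base : SemiconjBy A (Aᴴ * A) (A * Aᴴ) := by
    unfold SemiconjBy; rw [← mul_assoc]
  induction p using Polynomial.induction_on with
  | C a =>
      simp only [aeval_C]
      exact (Algebra.commutes a A).symm
  | add p q hp hq => simp only [map_add, mul_add, add_mul, hp, hq]
  | monomial k a hk =>
      have e1 : (C a * X ^ (k + 1) : ℝ[X]) = (C a * X ^ k) * X := by ring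
      rw [e1]
      generalize hq : (C a * X ^ k : ℝ[X]) = q at hk
      rw [_root_.map_mul, _root_.map_mul, aeval_X, aeval_X, ← mul_assoc, hk, mul_assoc,
        base.eq, ← mul_assoc]

lemma intertwine (A : Matrix m m ℂ) (f : ℝ → ℝ) :
    A * (Matrix.isHermitian_conjTranspose_mul_self A).cfc f
      = (Matrix.isHermitian_mul_conjTranspose_self A).cfc f * A := by
  classical
  set hP := Matrix.isHermitian_conjTranspose_mul_self A
  set hQ := Matrix.isHermitian_mul_conjTranspose_self A
  set s : Finset ℝ := (Finset.univ.image hP.eigenvalues) ∪ (Finset.univ.image hQ.eigenvalues)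
  set p : Polynomial ℝ := Lagrange.interpolate s id f with hpdef
  have hmemP : ∀ i, hP.eigenvalues i ∈ s := fun i =>
    Finset.mem_union_left _ (Finset.mem_image_of_mem _ (Finset.mem_univ i))
  have hmemQ : ∀ i, hQ.eigenvalues i ∈ s := fun i =>
    Finset.mem_union_right _ (Finset.mem_image_of_mem _ (Finset.mem_univ i))
  have hinj : Set.InjOn (id : ℝ → ℝ) s := Function.injective_id.injOn
  have hPf : hP.cfc f = hP.cfc (fun x => p.eval x) := by
    refine cfc_congr hP fun i => ?_
    exact (Lagrange.eval_interpolate_at_node f hinj (hmemP i)).symm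
  have hQf : hQ.cfc f = hQ.cfc (fun x => p.eval x) := by
    refine cfc_congr hQ fun i => ?_
    exact (Lagrange.eval_interpolate_at_node f hinj (hmemQ i)).symm
  rw [hPf, hQf, cfc_poly, cfc_poly]
  exact semiconj_aeval A p


lemma cfc_sub {H : Matrix m m ℂ} (hH : H.IsHermitian) (f g : ℝ → ℝ) :
    hH.cfc f - hH.cfc g = hH.cfc (fun x => f x - g x) := by
  have := cfc_add hH (fun x => f x - g x) g
  simp only [sub_add_cancel] at this
  rw [← this, add_sub_cancel_right]

/-- The key block positivity: for any `A`, `ε > 0`, `r > 0`, the block matrix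
`[[r(√(AAᴴ)+ε), A],[Aᴴ, r⁻¹(√(AᴴA)+ε)]]` is PSD. -/
lemma block_psd (A : Matrix m m ℂ) {ε r : ℝ} (hε : 0 < ε) (hr : 0 < r) :
    (Matrix.fromBlocks
      ((Matrix.isHermitian_mul_conjTranspose_self A).cfc (fun x => r * (Real.sqrt x + ε)))
      A Aᴴ
      ((Matrix.isHermitian_conjTranspose_mul_self A).cfc (fun x => r⁻¹ * (Real.sqrt x + ε)))).PosSemidef := by
  set hP := Matrix.isHermitian_conjTranspose_mul_self A with hPdef
  set hQ := Matrix.isHermitian_mul_conjTranspose_self A with hQdef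
  have hpos : ∀ x : ℝ, 0 < r * (Real.sqrt x + ε) := fun x => by positivity
  have hQPD : (hQ.cfc (fun x => r * (Real.sqrt x + ε))).PosDef :=
    cfc_posDef hQ fun i => hpos _
  haveI : Invertible (hQ.cfc (fun x => r * (Real.sqrt x + ε))) := hQPD.isUnit.invertible
  rw [Matrix.PosDef.fromBlocks₁₁ _ _ hQPD]
  -- compute the inverse
  have hinv : (hQ.cfc (fun x => r * (Real.sqrt x + ε)))⁻¹
      = hQ.cfc (fun x => (r * (Real.sqrt x + ε))⁻¹) := by
    refine Matrix.inv_eq_right_inv ?_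
    rw [cfc_mul, cfc_congr hQ (g := fun _ => 1) fun i => mul_inv_cancel₀ (hpos _).ne']
    exact cfc_one hQ
  rw [hinv]
  -- intertwine: Aᴴ * cfc_{A Aᴴ} g = cfc_{Aᴴ A} g * Aᴴ
  have hAA : Aᴴᴴ * Aᴴ = A * Aᴴ := by rw [Matrix.conjTranspose_conjTranspose]
  have hAA' : Aᴴ * Aᴴᴴ = Aᴴ * A := by rw [Matrix.conjTranspose_conjTranspose]
  have hint : ∀ g : ℝ → ℝ, Aᴴ * hQ.cfc g = hP.cfc g * Aᴴ := by
    intro g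
    have h1 := intertwine Aᴴ g
    rwa [cfc_matrix_congr hAA (Matrix.isHermitian_conjTranspose_mul_self Aᴴ) g,
      cfc_matrix_congr hAA' (Matrix.isHermitian_mul_conjTranspose_self Aᴴ) g] at h1
  rw [mul_assoc] at *
  have key : Aᴴ * (hQ.cfc (fun x => (r * (Real.sqrt x + ε))⁻¹) * A)
      = hP.cfc (fun x => (r * (Real.sqrt x + ε))⁻¹ * x) := by
    have hmul := cfc_mul hP (fun x => (r * (Real.sqrt x + ε))⁻¹) (fun x => x)
    rw [cfc_id] at hmul
    rw [← mul_assoc, hint, mul_assoc, hmul]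
  rw [key, cfc_sub]
  refine cfc_posSemidef hP fun i => ?_
  have hx : 0 ≤ hP.eigenvalues i := (Matrix.posSemidef_conjTranspose_mul_self A).eigenvalues_nonneg i
  set x := hP.eigenvalues i
  have hu : 0 < Real.sqrt x + ε := by positivity
  have h2 : (Real.sqrt x + ε)⁻¹ * x ≤ Real.sqrt x + ε := by
    rw [inv_mul_le_iff₀ hu]
    nlinarith [Real.sq_sqrt hx, Real.sqrt_nonneg x]
  have e3 : r⁻¹ * (Real.sqrt x + ε) - (r * (Real.sqrt x + ε))⁻¹ * x
      = r⁻¹ * ((Real.sqrt x + ε) - (Real.sqrt x + ε)⁻¹ * x) := by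
    rw [mul_inv]; ring
  rw [e3]
  have := sub_nonneg.mpr h2
  positivity


lemma trace_fromBlocks (A : Matrix m m ℂ) (B : Matrix m m ℂ) (C : Matrix m m ℂ)
    (D : Matrix m m ℂ) :
    (Matrix.fromBlocks A B C D).trace = A.trace + D.trace := by
  simp [Matrix.trace, Fintype.sum_sum_type, Matrix.diag, Matrix.fromBlocks]

lemma trace_re_nonneg_of_psd {S : Matrix m m ℂ} (hS : S.PosSemidef) : 0 ≤ S.trace.re := by
  have hdiag : ∀ i, 0 ≤ (S i i).re := by
    intro i
    have h := hS.re_dotProduct_nonneg (Pi.single i 1)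
    have e : star (Pi.single i (1 : ℂ)) ⬝ᵥ S *ᵥ Pi.single i 1 = S i i := by
      rw [Matrix.mulVec_single]
      simp [dotProduct, Pi.single_apply, apply_ite (star : ℂ → ℂ)]
    rw [e] at h
    exact h
  rw [Matrix.trace]
  rw [Complex.re_sum]
  exact Finset.sum_nonneg fun i _ => hdiag i

lemma trace_pair_re_nonneg {S T : Matrix m m ℂ} (hS : S.PosSemidef) (hT : T.PosSemidef) :
    0 ≤ (S * T).trace.re := by
  obtain ⟨C, rfl⟩ : ∃ C : Matrix m m ℂ, S = Cᴴ * C := ⟨hS.1.cfc Real.sqrt, by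
    rw [(cfc_posSemidef hS.1 fun i => Real.sqrt_nonneg _).1.eq, cfc_mul,
      cfc_congr hS.1 (g := fun x => x) fun i => Real.mul_self_sqrt (hS.eigenvalues_nonneg i), cfc_id]⟩
  have e : Cᴴ * C * T = Cᴴ * (C * T) := by rw [mul_assoc]
  rw [e, Matrix.trace_mul_comm]
  exact trace_re_nonneg_of_psd (hT.mul_mul_conjTranspose_same C)


lemma cfc_smul {H : Matrix m m ℂ} (hH : H.IsHermitian) (c : ℝ) (f : ℝ → ℝ) :
    hH.cfc (fun x => c * f x) = (c : ℂ) • hH.cfc f := by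
  rw [← cfc_mul hH (fun _ => c) f, cfc_const, smul_mul_assoc, one_mul]

lemma cfc_congr' {H H' : Matrix m m ℂ} (hH : H.IsHermitian) (hH' : H'.IsHermitian)
    (e : H = H') (f : ℝ → ℝ) : hH.cfc f = hH'.cfc f := by subst e; rfl

lemma cfc_smul' {H : Matrix m m ℂ} (hH : H.IsHermitian) (c : ℝ) {ε : ℝ} :
    hH.cfc (fun x => c * (Real.sqrt x + ε)) = (c : ℂ) • hH.cfc (fun x => Real.sqrt x + ε) :=
  cfc_smul hH c _

lemma pairing' {QA PA QB PB : Matrix m m ℂ} (A B : Matrix m m ℂ) {r : ℝ} (hr : 0 < r)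
    (hM1 : (Matrix.fromBlocks ((r:ℂ) • QA) A Aᴴ (((r⁻¹:ℝ):ℂ) • PA)).PosSemidef)
    (hM2 : (Matrix.fromBlocks QB B Bᴴ PB).PosSemidef)
    (hM2' : (Matrix.fromBlocks QB (-B) (-B)ᴴ PB).PosSemidef) :
    2 * |(Bᴴ * A).trace.re| ≤ r * (QA * QB).trace.re + r⁻¹ * (PA * PB).trace.re := by
  have key : ∀ E : Matrix m m ℂ,
      (Matrix.fromBlocks ((r:ℂ) • QA) A Aᴴ (((r⁻¹:ℝ):ℂ) • PA)
        * Matrix.fromBlocks QB E Eᴴ PB).trace.re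
        = r * (QA * QB).trace.re + r⁻¹ * (PA * PB).trace.re + 2 * (Eᴴ * A).trace.re := by
    intro E
    rw [Matrix.fromBlocks_multiply, trace_fromBlocks, Matrix.trace_add, Matrix.trace_add]
    have c1 : (A * Eᴴ).trace = (Eᴴ * A).trace := Matrix.trace_mul_comm A Eᴴ
    have c2 : (Aᴴ * E).trace = star ((Eᴴ * A).trace) := by
      rw [← Matrix.trace_conjTranspose, Matrix.conjTranspose_mul,
        Matrix.conjTranspose_conjTranspose]
    rw [smul_mul_assoc, smul_mul_assoc, Matrix.trace_smul, Matrix.trace_smul, c1, c2]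
    simp only [Complex.add_re, smul_eq_mul, Complex.mul_re, Complex.ofReal_re,
      Complex.ofReal_im, Complex.star_def, Complex.conj_re, zero_mul, sub_zero]
    ring
  have h1 : 0 ≤ r * (QA * QB).trace.re + r⁻¹ * (PA * PB).trace.re + 2 * (Bᴴ * A).trace.re := by
    have := trace_pair_re_nonneg hM1 hM2
    rwa [key B] at this
  have h2 : 0 ≤ r * (QA * QB).trace.re + r⁻¹ * (PA * PB).trace.re - 2 * (Bᴴ * A).trace.re := by
    have h := trace_pair_re_nonneg hM1 hM2'
    rw [key (-B)] at h
    have e : ((-B)ᴴ * A).trace.re = -(Bᴴ * A).trace.re := by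
      rw [Matrix.conjTranspose_neg, Matrix.neg_mul, Matrix.trace_neg]
      simp
    rw [e] at h; linarith
  rcases abs_cases ((Bᴴ * A).trace.re) with ⟨he, _⟩ | ⟨he, _⟩ <;> rw [he] <;> linarith

lemma pairing (A B : Matrix m m ℂ) {ε r : ℝ} (hε : 0 < ε) (hr : 0 < r) :
    2 * |(Bᴴ * A).trace.re| ≤
      r * (((Matrix.isHermitian_mul_conjTranspose_self A).cfc (fun x => Real.sqrt x + ε) *
            (Matrix.isHermitian_mul_conjTranspose_self B).cfc (fun x => Real.sqrt x + ε)).trace.re)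
      + r⁻¹ * (((Matrix.isHermitian_conjTranspose_mul_self A).cfc (fun x => Real.sqrt x + ε) *
            (Matrix.isHermitian_conjTranspose_mul_self B).cfc (fun x => Real.sqrt x + ε)).trace.re) := by
  have e1 : (fun x : ℝ => 1 * (Real.sqrt x + ε)) = (fun x : ℝ => Real.sqrt x + ε) := by
    funext x; rw [one_mul]
  have e2 : (fun x : ℝ => (1:ℝ)⁻¹ * (Real.sqrt x + ε)) = (fun x : ℝ => Real.sqrt x + ε) := by
    funext x; rw [inv_one, one_mul]
  have hM1 := block_psd A hε hr
  rw [cfc_smul' (Matrix.isHermitian_mul_conjTranspose_self A) r,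
    cfc_smul' (Matrix.isHermitian_conjTranspose_mul_self A) r⁻¹] at hM1
  have hM2 : (Matrix.fromBlocks
      ((Matrix.isHermitian_mul_conjTranspose_self B).cfc (fun x => Real.sqrt x + ε)) B Bᴴ
      ((Matrix.isHermitian_conjTranspose_mul_self B).cfc (fun x => Real.sqrt x + ε))).PosSemidef := by
    have h2 := block_psd B hε one_pos
    rwa [e1, e2] at h2
  have hM2' : (Matrix.fromBlocks
      ((Matrix.isHermitian_mul_conjTranspose_self B).cfc (fun x => Real.sqrt x + ε)) (-B) (-B)ᴴ
      ((Matrix.isHermitian_conjTranspose_mul_self B).cfc (fun x => Real.sqrt x + ε))).PosSemidef := by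
    have h2 := block_psd (-B) hε one_pos
    rw [e1, e2] at h2
    rwa [cfc_congr' (Matrix.isHermitian_mul_conjTranspose_self (-B))
        (Matrix.isHermitian_mul_conjTranspose_self B) (by rw [Matrix.conjTranspose_neg, neg_mul_neg]),
      cfc_congr' (Matrix.isHermitian_conjTranspose_mul_self (-B))
        (Matrix.isHermitian_conjTranspose_mul_self B)
        (by rw [Matrix.conjTranspose_neg, neg_mul_neg])] at h2
  exact pairing' A B hr hM1 hM2 hM2'


lemma aux_scalar {p q c : ℝ} (hp : 0 ≤ p) (hq : 0 ≤ q)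
    (h : ∀ r : ℝ, 0 < r → 2 * |c| ≤ r * q + r⁻¹ * p) : c ^ 2 ≤ q * p := by
  have key : |c| ≤ Real.sqrt (q * p) := by
    rcases eq_or_lt_of_le hq with hq0 | hq0
    · have hc0 : 2 * |c| ≤ 0 := by
        refine le_of_forall_pos_le_add fun δ hδ => ?_
        have hr : 0 < (p + 1) / δ := by positivity
        have h2 := h _ hr
        rw [← hq0, mul_zero, zero_add] at h2
        have hinv : ((p + 1) / δ)⁻¹ * p ≤ δ := by
          rw [inv_div, div_mul_eq_mul_div, div_le_iff₀ (by positivity)]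
          nlinarith
        linarith
      have : |c| = 0 := le_antisymm (by linarith) (abs_nonneg c)
      rw [this]
      positivity
    · have h2 : 2 * |c| ≤ 2 * Real.sqrt (q * p) := by
        refine le_of_forall_pos_le_add fun δ hδ => ?_
        set s := Real.sqrt (q * p) with hs
        have hsnn : 0 ≤ s := Real.sqrt_nonneg _
        have hr : 0 < (s + δ) / q := by positivity
        have h3 := h _ hr
        have e1 : (s + δ) / q * q = s + δ := div_mul_cancel₀ _ hq0.ne'
        have e2 : ((s + δ) / q)⁻¹ * p ≤ s := by
          rw [inv_div, div_mul_eq_mul_div, div_le_iff₀ (by positivity)]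
          have : q * p = s * s := by
            rw [hs]; exact (Real.mul_self_sqrt (mul_nonneg hq hp)).symm
          nlinarith
        linarith
      linarith
  calc c ^ 2 = |c| ^ 2 := (sq_abs c).symm
  _ ≤ Real.sqrt (q * p) ^ 2 := by
      exact pow_le_pow_left₀ (abs_nonneg c) key 2
  _ = q * p := Real.sq_sqrt (mul_nonneg hq hp)

lemma aux_limit {c q0 q1 p0 p1 N : ℝ}
    (h : ∀ ε : ℝ, 0 < ε → c ≤ (q0 + ε * q1 + ε ^ 2 * N) * (p0 + ε * p1 + ε ^ 2 * N)) :
    c ≤ q0 * p0 := by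
  have hcont : Continuous fun ε : ℝ => (q0 + ε * q1 + ε ^ 2 * N) * (p0 + ε * p1 + ε ^ 2 * N) := by
    continuity
  have ht0 := hcont.tendsto 0
  have hval : (q0 + (0:ℝ) * q1 + (0:ℝ) ^ 2 * N) * (p0 + (0:ℝ) * p1 + (0:ℝ) ^ 2 * N) = q0 * p0 := by
    norm_num
  rw [hval] at ht0
  have ht := ht0.mono_left (nhdsWithin_le_nhds (s := Set.Ioi (0:ℝ)))
  exact ge_of_tendsto ht (Filter.eventually_of_mem self_mem_nhdsWithin fun ε hε => h ε hε)

lemma trace_expand (X Y : Matrix m m ℂ) (ε : ℝ) :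
    ((X + (ε:ℂ) • 1) * (Y + (ε:ℂ) • 1)).trace.re
      = (X * Y).trace.re + ε * (X.trace.re + Y.trace.re) + ε ^ 2 * (Fintype.card m) := by
  have e : (X + (ε:ℂ) • 1) * (Y + (ε:ℂ) • 1)
      = X * Y + ((ε:ℂ) • X + ((ε:ℂ) • Y + ((ε:ℂ) * (ε:ℂ)) • (1 : Matrix m m ℂ))) := by
    simp only [add_mul, mul_add, smul_mul_assoc, mul_smul_comm, one_mul, mul_one, smul_smul, smul_add]
    abel
  rw [e, Matrix.trace_add, Matrix.trace_add, Matrix.trace_add, Matrix.trace_smul,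
    Matrix.trace_smul, Matrix.trace_smul, Matrix.trace_one]
  simp only [Complex.add_re, smul_eq_mul, Complex.mul_re, Complex.ofReal_re, Complex.ofReal_im,
    Complex.natCast_re, Complex.natCast_im, zero_mul, mul_zero, sub_zero]
  ring

lemma cfc_sqrt_add {H : Matrix m m ℂ} (hH : H.IsHermitian) (ε : ℝ) :
    hH.cfc (fun x => Real.sqrt x + ε) = hH.cfc Real.sqrt + (ε:ℂ) • 1 := by
  rw [← cfc_const hH ε, cfc_add]


/-- The central inequality: `(Re Tr(Bᴴ A))² ≤ Re Tr(|A*||B*|) * Re Tr(|A||B|)`. -/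
lemma core (A B : Matrix m m ℂ) :
    ((Bᴴ * A).trace.re) ^ 2 ≤
      (((Matrix.isHermitian_mul_conjTranspose_self A).cfc Real.sqrt *
        (Matrix.isHermitian_mul_conjTranspose_self B).cfc Real.sqrt).trace.re) *
      (((Matrix.isHermitian_conjTranspose_mul_self A).cfc Real.sqrt *
        (Matrix.isHermitian_conjTranspose_mul_self B).cfc Real.sqrt).trace.re) := by
  refine aux_limit
    (q1 := ((Matrix.isHermitian_mul_conjTranspose_self A).cfc Real.sqrt).trace.re
         + ((Matrix.isHermitian_mul_conjTranspose_self B).cfc Real.sqrt).trace.re)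
    (p1 := ((Matrix.isHermitian_conjTranspose_mul_self A).cfc Real.sqrt).trace.re
         + ((Matrix.isHermitian_conjTranspose_mul_self B).cfc Real.sqrt).trace.re)
    (N := (Fintype.card m : ℝ)) (fun ε hε => ?_)
  have hfnn : ∀ x : ℝ, 0 ≤ Real.sqrt x + ε := fun x => by positivity
  have hqnn : 0 ≤ ((Matrix.isHermitian_mul_conjTranspose_self A).cfc (fun x => Real.sqrt x + ε) *
      (Matrix.isHermitian_mul_conjTranspose_self B).cfc (fun x => Real.sqrt x + ε)).trace.re :=
    trace_pair_re_nonneg (cfc_posSemidef _ fun i => hfnn _) (cfc_posSemidef _ fun i => hfnn _)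
  have hpnn : 0 ≤ ((Matrix.isHermitian_conjTranspose_mul_self A).cfc (fun x => Real.sqrt x + ε) *
      (Matrix.isHermitian_conjTranspose_mul_self B).cfc (fun x => Real.sqrt x + ε)).trace.re :=
    trace_pair_re_nonneg (cfc_posSemidef _ fun i => hfnn _) (cfc_posSemidef _ fun i => hfnn _)
  have hsq := aux_scalar hpnn hqnn (fun r hr => pairing A B hε hr)
  rw [cfc_sqrt_add (Matrix.isHermitian_mul_conjTranspose_self A),
      cfc_sqrt_add (Matrix.isHermitian_mul_conjTranspose_self B),
      cfc_sqrt_add (Matrix.isHermitian_conjTranspose_mul_self A),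
      cfc_sqrt_add (Matrix.isHermitian_conjTranspose_mul_self B),
      trace_expand, trace_expand] at hsq
  calc ((Bᴴ * A).trace.re) ^ 2 ≤ _ := hsq
  _ = _ := by ring


section Glue
variable {n : ℕ}

noncomputable def emb (X : Matrix (Fin n) (Fin n) ℂ) : EuclideanSpace ℂ (Fin n × Fin n) :=
  WithLp.toLp 2 (fun p => X p.1 p.2)

lemma trace_eq_inner (X Y : Matrix (Fin n) (Fin n) ℂ) :
    (Yᴴ * X).trace = inner (𝕜 := ℂ) (emb Y) (emb X) := by
  rw [PiLp.inner_apply, Matrix.trace, Fintype.sum_prod_type]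
  simp only [Matrix.diag_apply, Matrix.mul_apply, Matrix.conjTranspose_apply, emb,
    RCLike.inner_apply, starRingEnd_apply]
  rw [Finset.sum_comm]
  exact Finset.sum_congr rfl fun _ _ => Finset.sum_congr rfl fun _ _ => mul_comm _ _

lemma hsNorm_eq_norm (X : Matrix (Fin n) (Fin n) ℂ) : hsNorm X = ‖emb X‖ := by
  rw [hsNorm, trace_eq_inner]
  have h := inner_self_eq_norm_sq (𝕜 := ℂ) (emb X)
  rw [RCLike.re_to_complex] at h
  rw [h, Real.sqrt_sq (norm_nonneg _)]

lemma abs_trace_le (X Y : Matrix (Fin n) (Fin n) ℂ) :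
    |(Yᴴ * X).trace.re| ≤ hsNorm X * hsNorm Y := by
  rw [trace_eq_inner, hsNorm_eq_norm, hsNorm_eq_norm]
  calc |(inner (𝕜 := ℂ) (emb Y) (emb X)).re| ≤ ‖(inner (𝕜 := ℂ) (emb Y) (emb X))‖ :=
        Complex.abs_re_le_norm _
  _ ≤ ‖emb Y‖ * ‖emb X‖ := norm_inner_le_norm _ _
  _ = ‖emb X‖ * ‖emb Y‖ := mul_comm _ _

lemma hsNorm_pos {X : Matrix (Fin n) (Fin n) ℂ} (hX : X ≠ 0) : 0 < hsNorm X := by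
  rw [hsNorm_eq_norm]
  rw [norm_pos_iff]
  intro h
  apply hX
  ext i j
  have := congrArg (fun v => v (i, j)) h
  simpa [emb] using this

lemma matAbs_eq_cfc (X : Matrix (Fin n) (Fin n) ℂ) :
    matAbs X = (Matrix.isHermitian_conjTranspose_mul_self X).cfc Real.sqrt := rfl

lemma matAbs_conjTranspose_eq_cfc (X : Matrix (Fin n) (Fin n) ℂ) :
    matAbs Xᴴ = (Matrix.isHermitian_mul_conjTranspose_self X).cfc Real.sqrt := by
  rw [matAbs_eq_cfc]
  exact cfc_congr' _ _ (by rw [Matrix.conjTranspose_conjTranspose]) _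

lemma matAbs_isHermitian (X : Matrix (Fin n) (Fin n) ℂ) : (matAbs X)ᴴ = matAbs X :=
  by rw [matAbs_eq_cfc]; exact (cfc_posSemidef _ fun i => Real.sqrt_nonneg _).1

lemma matAbs_mul_self (X : Matrix (Fin n) (Fin n) ℂ) : matAbs X * matAbs X = Xᴴ * X :=
  by rw [matAbs_eq_cfc, cfc_mul, cfc_congr _ (g := fun x => x) fun i =>
    Real.mul_self_sqrt ((Matrix.posSemidef_conjTranspose_mul_self X).eigenvalues_nonneg i), cfc_id]

lemma hsNorm_matAbs (X : Matrix (Fin n) (Fin n) ℂ) : hsNorm (matAbs X) = hsNorm X := by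
  rw [hsNorm, hsNorm, matAbs_isHermitian, matAbs_mul_self]

lemma hsNorm_conjTranspose (X : Matrix (Fin n) (Fin n) ℂ) : hsNorm Xᴴ = hsNorm X := by
  rw [hsNorm, hsNorm, Matrix.conjTranspose_conjTranspose, Matrix.trace_mul_comm]

lemma hsNorm_zero_lt_of_ne {X : Matrix (Fin n) (Fin n) ℂ} (hX : X ≠ 0) : matAbs X ≠ 0 := by
  intro h
  have h1 : hsNorm (matAbs X) = hsNorm X := hsNorm_matAbs X
  rw [h] at h1
  have h2 : hsNorm (0 : Matrix (Fin n) (Fin n) ℂ) = 0 := by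
    simp [hsNorm]
  rw [h2] at h1
  exact (hsNorm_pos hX).ne h1

lemma cos_theta {X Y : Matrix (Fin n) (Fin n) ℂ} (hX : X ≠ 0) (hY : Y ≠ 0) :
    Real.cos (theta X Y) = (Yᴴ * X).trace.re / (hsNorm X * hsNorm Y) := by
  have hxy : 0 < hsNorm X * hsNorm Y := mul_pos (hsNorm_pos hX) (hsNorm_pos hY)
  have habs : |(Yᴴ * X).trace.re / (hsNorm X * hsNorm Y)| ≤ 1 := by
    rw [abs_div, abs_of_pos hxy]
    exact div_le_one_of_le₀ (abs_trace_le X Y) hxy.le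
  rw [theta, Real.cos_arccos (abs_le.mp habs).1 (abs_le.mp habs).2]

end Glue
end HSAux

theorem stmt_8 {n : ℕ} (X Y : Matrix (Fin n) (Fin n) ℂ) (hX : X ≠ 0) (hY : Y ≠ 0) :
    Real.cos (theta X Y) ^ 2 ≤
      Real.cos (theta (matAbs Xᴴ) (matAbs Yᴴ)) * Real.cos (theta (matAbs X) (matAbs Y)) := by
  have hx : 0 < hsNorm X := HSAux.hsNorm_pos hX
  have hy : 0 < hsNorm Y := HSAux.hsNorm_pos hY
  have hXa : matAbs X ≠ 0 := HSAux.hsNorm_zero_lt_of_ne hX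
  have hYa : matAbs Y ≠ 0 := HSAux.hsNorm_zero_lt_of_ne hY
  have hXat : matAbs Xᴴ ≠ 0 := HSAux.hsNorm_zero_lt_of_ne (fun h => hX (by
    simpa using congrArg Matrix.conjTranspose h))
  have hYat : matAbs Yᴴ ≠ 0 := HSAux.hsNorm_zero_lt_of_ne (fun h => hY (by
    simpa using congrArg Matrix.conjTranspose h))
  rw [HSAux.cos_theta hX hY, HSAux.cos_theta hXat hYat, HSAux.cos_theta hXa hYa]
  -- normalize the norms
  rw [HSAux.hsNorm_matAbs, HSAux.hsNorm_matAbs, HSAux.hsNorm_matAbs, HSAux.hsNorm_matAbs,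
    HSAux.hsNorm_conjTranspose, HSAux.hsNorm_conjTranspose]
  -- normalize the traces
  rw [HSAux.matAbs_isHermitian, HSAux.matAbs_isHermitian]
  have hcore := HSAux.core X Y
  rw [← HSAux.matAbs_conjTranspose_eq_cfc, ← HSAux.matAbs_conjTranspose_eq_cfc,
    ← HSAux.matAbs_eq_cfc, ← HSAux.matAbs_eq_cfc] at hcore
  have e1 : (matAbs Yᴴ * matAbs Xᴴ).trace = (matAbs Xᴴ * matAbs Yᴴ).trace :=
    Matrix.trace_mul_comm _ _
  have e2 : (matAbs Y * matAbs X).trace = (matAbs X * matAbs Y).trace :=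
    Matrix.trace_mul_comm _ _
  rw [e1, e2]
  have hxy : 0 < hsNorm X * hsNorm Y := mul_pos hx hy
  rw [div_pow, div_mul_div_comm, ← pow_two]
  exact (div_le_div_iff_of_pos_right (by positivity)).mpr hcore
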